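/- arXiv:2511.10875 — 4 statements merged into one kernel-verified Lean document; each statement's English description precedes it below -/
import Mathlib

section
/- For every n ≥ 3, the independence number of the cubical staircase graph CS_n equals (n³ − 3n² + 2n)/12 if n is even, and (n³ − 3n² + 5n − 3)/12 if n is odd. -/
/-!
Every edge of `CS n` changes the coordinate sum by one, so the vertices with odd coordinate sum
form an independent set. Conversely, an involution matches every vertex with a neighbour except
the vertices `(i, i, n - 1 - i)` with `i` and `n - 1 - i` odd. An independent set meets each
matched pair at most once, so twice its size is at most `|V| + #fixed points`; the odd class meets
every pair once and contains every fixed point, so it attains this bound. Finally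
`|V| = n (n - 1) (n - 2) / 6`, and there are `(n - 1) / 2` fixed points for odd `n`, none for
even `n`.
-/

open SimpleGraph Finset

/-- The `k`-token graph of a graph `G`: vertices are `k`-element subsets of the vertex set,
two subsets adjacent iff their symmetric difference is `{x, y}` with `xy` an edge of `G`. -/
def tokenGraph {V : Type*} [DecidableEq V] (G : SimpleGraph V) (k : ℕ) :
    SimpleGraph {s : Finset V // s.card = k} where
  Adj A B := ∃ x y, G.Adj x y ∧ symmDiff A.1 B.1 = {x, y}
  symm := ⟨by
    rintro A B ⟨x, y, hxy, h⟩
    exact ⟨x, y, hxy, by rwa [symmDiff_comm]⟩⟩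
  loopless := ⟨by
    rintro A ⟨x, y, hxy, h⟩
    rw [symmDiff_self] at h
    exact (Finset.insert_nonempty x {y}).ne_empty (by simpa using h.symm)⟩

/-- Vertex set of the cubical staircase graph `CS n` (1-indexed coordinates). -/
abbrev CSVert (n : ℕ) :=
  {v : ℕ × ℕ × ℕ // 1 ≤ v.1 ∧ v.1 ≤ n - 2 ∧ 1 ≤ v.2.1 ∧ v.2.1 ≤ v.1 ∧
    1 ≤ v.2.2 ∧ v.2.2 ≤ n - 1 - v.1}

/-- The cubical staircase graph `CS n`: two vertices are adjacent iff they differ in exactly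
one coordinate, by exactly 1. -/
def CS (n : ℕ) : SimpleGraph (CSVert n) where
  Adj a b :=
    (a.1.1 = b.1.1 ∧ a.1.2.1 = b.1.2.1 ∧ (a.1.2.2 + 1 = b.1.2.2 ∨ b.1.2.2 + 1 = a.1.2.2)) ∨
    (a.1.1 = b.1.1 ∧ a.1.2.2 = b.1.2.2 ∧ (a.1.2.1 + 1 = b.1.2.1 ∨ b.1.2.1 + 1 = a.1.2.1)) ∨
    (a.1.2.1 = b.1.2.1 ∧ a.1.2.2 = b.1.2.2 ∧ (a.1.1 + 1 = b.1.1 ∨ b.1.1 + 1 = a.1.1))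
  symm := ⟨fun a b h => by omega⟩
  loopless := ⟨fun a h => by omega⟩

/-- Disjoint union of an arbitrary family of graphs. -/
def sigmaGraph {ι : Type*} {V : ι → Type*} (G : ∀ i, SimpleGraph (V i)) :
    SimpleGraph (Σ i, V i) where
  Adj a b := ∃ (i : ι) (x y : V i), (G i).Adj x y ∧ a = ⟨i, x⟩ ∧ b = ⟨i, y⟩
  symm := ⟨by rintro a b ⟨i, x, y, h, rfl, rfl⟩; exact ⟨i, y, x, h.symm, rfl, rfl⟩⟩
  loopless := ⟨by
    rintro a ⟨i, x, y, h, rfl, he⟩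
    exact h.ne (by simpa using he)⟩

namespace SimpleGraph

variable {V : Type*} [Fintype V] [DecidableEq V] {G : SimpleGraph V} {f : V → V}

theorem two_mul_card_le_of_involutive (hf : Function.Involutive f)
    (hadj : ∀ v, f v ≠ v → G.Adj v (f v)) {s : Finset V}
    (hs : ∀ a ∈ s, ∀ b ∈ s, ¬G.Adj a b) :
    2 * #s ≤ Fintype.card V + #{v | f v = v} := by
  have hmaps : Set.MapsTo f ↑(s \ ({v | f v = v} : Finset V)) ↑sᶜ := by
    intro a ha
    simp only [coe_sdiff, Set.mem_sdiff, mem_coe] at ha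
    simpa using fun hfa => hs a ha.1 (f a) hfa (hadj a (by simpa using ha.2))
  have hle := card_le_card_of_injOn f hmaps hf.injective.injOn
  have := le_card_sdiff {v | f v = v} s
  rw [card_compl] at hle
  have := card_le_univ s
  omega

theorem two_mul_card_filter_eq_of_involutive (hf : Function.Involutive f)
    (hadj : ∀ v, f v ≠ v → G.Adj v (f v)) {p : V → Prop} [DecidablePred p]
    (hp : ∀ a b, G.Adj a b → (p a ↔ ¬p b)) (hfix : ∀ v, f v = v → p v) :
    2 * #{v | p v} = Fintype.card V + #{v | f v = v} := by
  have hsub : ({v | f v = v} : Finset V) ⊆ ({v | p v} : Finset V) := by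
    intro v; simpa using hfix v
  have hbij : #(({v | p v} : Finset V) \ ({v | f v = v} : Finset V)) = #{v | ¬p v} := by
    refine card_nbij' f f ?_ ?_ (fun v _ => hf v) (fun v _ => hf v)
    · intro v hv
      simp only [coe_sdiff, coe_filter, Set.mem_sdiff] at hv
      simpa using (hp v (f v) (hadj v (by simpa using hv.2))).1 (by simpa using hv.1)
    · intro v hv
      have hv : ¬p v := by simpa using hv
      have hne : f v ≠ v := fun h => hv (hfix v h)
      simp only [coe_sdiff, coe_filter, Set.mem_sdiff]
      simpa [hf v] using ⟨(hp (f v) v (hadj v hne).symm).2 hv, hne.symm⟩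
  have := card_sdiff_add_card_eq_card hsub
  have := card_filter_add_card_filter_not (s := univ) (fun v => p v)
  rw [card_univ] at this
  omega

theorem isGreatest_card_indep_of_involutive (hf : Function.Involutive f)
    (hadj : ∀ v, f v ≠ v → G.Adj v (f v)) {p : V → Prop} [DecidablePred p]
    (hp : ∀ a b, G.Adj a b → (p a ↔ ¬p b)) (hfix : ∀ v, f v = v → p v) :
    IsGreatest {k : ℕ | ∃ s : Finset V, s.card = k ∧ ∀ a ∈ s, ∀ b ∈ s, ¬G.Adj a b}
      #{v | p v} := by
  refine ⟨⟨_, rfl, fun a ha b hb hab => ?_⟩, ?_⟩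
  · simp only [mem_filter, mem_univ, true_and] at ha hb
    exact (hp a b hab).1 ha hb
  · rintro _ ⟨s, rfl, hs⟩
    have := two_mul_card_le_of_involutive hf hadj hs
    have := two_mul_card_filter_eq_of_involutive hf hadj hp hfix
    omega

end SimpleGraph

theorem two_mul_sum_Icc_id (m : ℕ) : 2 * ∑ i ∈ Icc 1 m, i = m * (m + 1) := by
  induction m with
  | zero => simp
  | succ m ih => rw [sum_Icc_succ_top (by omega), mul_add, ih]; ring

theorem six_mul_sum_Icc_mul_sub (m : ℕ) :
    6 * ∑ i ∈ Icc 1 m, i * (m + 1 - i) = m * (m + 1) * (m + 2) := by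
  induction m with
  | zero => simp
  | succ m ih =>
    have htop : ∑ i ∈ Icc 1 (m + 1), i * (m + 1 - i) = ∑ i ∈ Icc 1 m, i * (m + 1 - i) := by
      simp [sum_Icc_succ_top]
    have hsplit : ∑ i ∈ Icc 1 (m + 1), i * (m + 1 + 1 - i) =
        ∑ i ∈ Icc 1 (m + 1), i * (m + 1 - i) + ∑ i ∈ Icc 1 (m + 1), i := by
      rw [← sum_add_distrib]
      refine sum_congr rfl fun i hi => ?_
      rw [mem_Icc] at hi
      rw [show m + 1 + 1 - i = m + 1 - i + 1 by omega, mul_add_one]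
    have hgauss := two_mul_sum_Icc_id (m + 1)
    rw [hsplit, htop, mul_add, ih]
    linear_combination 3 * hgauss

theorem cube_sub_three_mul_sq (n : ℕ) : n ^ 3 - 3 * n ^ 2 = n ^ 2 * (n - 3) := by
  rw [Nat.mul_sub, ← pow_succ, mul_comm]

theorem cube_sub_three_mul_sq_add_two_mul {n : ℕ} (hn : 3 ≤ n) :
    n ^ 3 - 3 * n ^ 2 + 2 * n = n * (n - 1) * (n - 2) := by
  obtain ⟨m, rfl⟩ := Nat.exists_eq_add_of_le' hn
  rw [cube_sub_three_mul_sq, Nat.add_sub_cancel]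
  show _ = (m + 3) * (m + 2) * (m + 1)
  ring

theorem cube_sub_three_mul_sq_add_five_mul_sub_three {n : ℕ} (hn : 3 ≤ n) :
    n ^ 3 - 3 * n ^ 2 + 5 * n - 3 = n * (n - 1) * (n - 2) + 3 * (n - 1) := by
  obtain ⟨m, rfl⟩ := Nat.exists_eq_add_of_le' hn
  rw [cube_sub_three_mul_sq, Nat.add_sub_cancel]
  show _ = (m + 3) * (m + 2) * (m + 1) + 3 * (m + 2)
  rw [show (m + 3) ^ 2 * m + 5 * (m + 3) = (m + 3) * (m + 2) * (m + 1) + 3 * (m + 2) + 3 by ring,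
    Nat.add_sub_cancel]

namespace CS

variable {n : ℕ}

def vertexFinset (n : ℕ) : Finset (ℕ × ℕ × ℕ) :=
  ((Icc 1 (n - 2)).sigma fun i => Icc 1 i ×ˢ Icc 1 (n - 1 - i)).map
    (Equiv.sigmaEquivProd ℕ (ℕ × ℕ)).toEmbedding

theorem mem_vertexFinset {v : ℕ × ℕ × ℕ} :
    v ∈ vertexFinset n ↔ 1 ≤ v.1 ∧ v.1 ≤ n - 2 ∧ 1 ≤ v.2.1 ∧ v.2.1 ≤ v.1 ∧
      1 ≤ v.2.2 ∧ v.2.2 ≤ n - 1 - v.1 := by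
  simp only [vertexFinset, mem_map_equiv, Equiv.sigmaEquivProd_symm_apply, mem_sigma, mem_product,
    mem_Icc]
  omega

instance (n : ℕ) : Fintype (CSVert n) := Fintype.subtype _ fun _ => mem_vertexFinset

theorem six_mul_card_vert (hn : 2 ≤ n) : 6 * Fintype.card (CSVert n) = n * (n - 1) * (n - 2) := by
  obtain ⟨m, rfl⟩ := Nat.exists_eq_add_of_le' hn
  rw [Fintype.card_of_subtype _ fun _ => mem_vertexFinset, vertexFinset, card_map, card_sigma,
    Nat.add_sub_cancel]
  have hfibre : ∀ i ∈ Icc 1 m, #(Icc 1 i ×ˢ Icc 1 (m + 2 - 1 - i)) = i * (m + 1 - i) := by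
    intro i _
    rw [card_product, Nat.card_Icc, Nat.card_Icc]
    congr 1
  rw [sum_congr rfl hfibre, six_mul_sum_Icc_mul_sub, show m + 2 - 1 = m + 1 by omega]
  ring

/-- Pairs `k = 2t - 1` with `k = 2t` in each column `(i, j, ·)`; the top vertex of a column of odd
height is paired along `j` in the same way. Only `(i, i, n - 1 - i)` with `i` and `n - 1 - i` odd
stays unmatched. -/
def partnerTriple (n : ℕ) : ℕ × ℕ × ℕ → ℕ × ℕ × ℕ
  | (i, j, k) =>
    if k % 2 = 0 then (i, j, k - 1)
    else if k < n - 1 - i then (i, j, k + 1)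
    else if j % 2 = 0 then (i, j - 1, k)
    else if j < i then (i, j + 1, k)
    else (i, j, k)

def partner (v : CSVert n) : CSVert n :=
  ⟨partnerTriple n v.1, by
    obtain ⟨⟨i, j, k⟩, hv⟩ := v
    dsimp only [partnerTriple] at hv ⊢
    split_ifs <;> dsimp only <;> omega⟩

theorem partner_involutive : Function.Involutive (partner (n := n)) := by
  rintro ⟨⟨i, j, k⟩, hv⟩
  simp only [partner, partnerTriple, Subtype.mk.injEq] at hv ⊢
  split_ifs <;> simp_all [Prod.ext_iff] <;> omega

theorem adj_partner (v : CSVert n) (h : partner v ≠ v) : (CS n).Adj v (partner v) := by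
  obtain ⟨⟨i, j, k⟩, hv⟩ := v
  simp only [partner, partnerTriple, ne_eq, Subtype.mk.injEq, CS] at hv h ⊢
  split_ifs at h ⊢ <;> simp_all

theorem partner_eq_self_iff (v : CSVert n) :
    partner v = v ↔ v.1.2.1 = v.1.1 ∧ v.1.1 + v.1.2.2 + 1 = n ∧ v.1.1 % 2 = 1 ∧
      v.1.2.2 % 2 = 1 := by
  obtain ⟨⟨i, j, k⟩, hv⟩ := v
  simp only [partner, partnerTriple, Subtype.mk.injEq] at hv ⊢
  split_ifs <;> simp_all [Prod.ext_iff] <;> omega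

theorem odd_iff_not_odd_of_adj {a b : CSVert n} (h : (CS n).Adj a b) :
    Odd (a.1.1 + a.1.2.1 + a.1.2.2) ↔ ¬Odd (b.1.1 + b.1.2.1 + b.1.2.2) := by
  simp only [CS] at h
  simp only [Nat.odd_iff]
  omega

theorem odd_of_partner_eq_self (v : CSVert n) (h : partner v = v) :
    Odd (v.1.1 + v.1.2.1 + v.1.2.2) := by
  rw [partner_eq_self_iff] at h
  rw [Nat.odd_iff]
  omega

theorem card_fixed_partner :
    #{v : CSVert n | partner v = v} = if Even n then 0 else (n - 1) / 2 := by
  split_ifs with hn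
  · rw [card_eq_zero, filter_eq_empty_iff]
    intro v _ hv
    rw [partner_eq_self_iff] at hv
    obtain ⟨m, rfl⟩ := hn
    omega
  · rw [← card_range ((n - 1) / 2)]
    rw [Nat.not_even_iff_odd] at hn
    obtain ⟨m, rfl⟩ := hn
    refine card_bij (fun v _ => v.1.1 / 2) ?_ ?_ ?_
    · intro v hv
      rw [mem_filter, partner_eq_self_iff] at hv
      rw [mem_range]
      omega
    · intro a ha b hb hab
      rw [mem_filter, partner_eq_self_iff] at ha hb
      ext <;> omega
    · intro t ht
      rw [mem_range] at ht
      refine ⟨⟨(2 * t + 1, 2 * t + 1, 2 * m - 2 * t - 1), by dsimp only; omega⟩, ?_,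
        by dsimp only; omega⟩
      rw [mem_filter, partner_eq_self_iff]
      refine ⟨mem_univ _, ?_⟩
      dsimp only
      omega

end CS

theorem stmt8 {n : ℕ} (hn : 3 ≤ n) :
    IsGreatest {k : ℕ | ∃ s : Finset (CSVert n), s.card = k ∧
        ∀ a ∈ s, ∀ b ∈ s, ¬(CS n).Adj a b}
      (if Even n then (n ^ 3 - 3 * n ^ 2 + 2 * n) / 12
       else (n ^ 3 - 3 * n ^ 2 + 5 * n - 3) / 12) := by
  have hf := CS.partner_involutive (n := n)
  have hp : ∀ a b, (CS n).Adj a b → _ := fun _ _ => CS.odd_iff_not_odd_of_adj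
  have hfix := CS.odd_of_partner_eq_self (n := n)
  have hcard := two_mul_card_filter_eq_of_involutive hf CS.adj_partner hp hfix
  convert isGreatest_card_indep_of_involutive hf CS.adj_partner hp hfix using 1
  have hvert := CS.six_mul_card_vert (by omega : 2 ≤ n)
  rw [CS.card_fixed_partner] at hcard
  split_ifs at hcard ⊢ with hpar
  · rw [cube_sub_three_mul_sq_add_two_mul hn]
    omega
  · rw [cube_sub_three_mul_sq_add_five_mul_sub_three hn]
    rw [Nat.not_even_iff] at hpar
    omega
end

section
/- For every n ≥ 4, the diameter of the 3-token graph Γ₃(P_n) of the path on n vertices equals 3(n−3). -/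
/-! The sum of the token positions is a potential on the `k`-token graph of the path `P_n`
that changes by exactly one along every edge. Unless all tokens sit on the `k` leftmost
vertices, some token has a free left neighbour, so the potential can be lowered by one; dually
it can be raised unless all tokens sit on the `k` rightmost vertices. Hence the distances to
these two extreme configurations are read off from the potential; routing any two
configurations through the nearer of them gives distance at most `k (n - k)`, the potential
gap between the extremes, and that gap is attained between the extremes themselves. -/

open SimpleGraph Finset

namespace SimpleGraph

variable {V : Type*} {G : SimpleGraph V} {f : V → ℕ}

theorem Walk.le_add_length (hf : ∀ u v, G.Adj u v → f u ≤ f v + 1) {u v : V}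
    (p : G.Walk u v) : f u ≤ f v + p.length := by
  induction p with
  | nil => simp
  | cons h _ ih =>
    have := hf _ _ h
    rw [Walk.length_cons]
    omega

theorem exists_walk_length_add_le {v₀ : V} (hdown : ∀ v ≠ v₀, ∃ w, G.Adj v w ∧ f w < f v)
    (v : V) : ∃ p : G.Walk v v₀, p.length + f v₀ ≤ f v := by
  induction hv : f v using Nat.strong_induction_on generalizing v with
  | _ m ih =>
    by_cases h : v = v₀
    · subst h
      exact ⟨.nil, by simp [hv]⟩
    · obtain ⟨w, hvw, hw⟩ := hdown v h
      obtain ⟨p, hp⟩ := ih (f w) (hv ▸ hw) w rfl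
      exact ⟨.cons hvw p, by rw [Walk.length_cons]; omega⟩

theorem ediam_eq_of_potential {c : ℕ} {bot top : V} (hf : ∀ u v, G.Adj u v → f u ≤ f v + 1)
    (hc : ∀ v, f v ≤ c) (hdown : ∀ v ≠ bot, ∃ w, G.Adj v w ∧ f w < f v)
    (hup : ∀ v ≠ top, ∃ w, G.Adj v w ∧ f v < f w) :
    G.ediam = (f top - f bot : ℕ) := by
  have hup' : ∀ v ≠ top, ∃ w, G.Adj v w ∧ c - f w < c - f v := fun v hv => by
    obtain ⟨w, hvw, hw⟩ := hup v hv
    exact ⟨w, hvw, by have := hc w; omega⟩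
  apply le_antisymm
  · refine ediam_le_of_edist_le fun u v => ?_
    obtain ⟨pu, hpu⟩ := exists_walk_length_add_le hdown u
    obtain ⟨pv, hpv⟩ := exists_walk_length_add_le hdown v
    obtain ⟨qu, hqu⟩ := exists_walk_length_add_le hup' u
    obtain ⟨qv, hqv⟩ := exists_walk_length_add_le hup' v
    have := hc u
    have := hc v
    have := hc top
    -- the routes through `bot` and through `top` have total length at most `2 * (f top - f bot)`
    rcases (show (pu.append pv.reverse).length ≤ f top - f bot ∨
        (qu.append qv.reverse).length ≤ f top - f bot by
      simp only [Walk.length_append, Walk.length_reverse]; omega) with h | h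
    all_goals exact (edist_le _).trans (by exact_mod_cast h)
  · obtain ⟨p, -⟩ := exists_walk_length_add_le hdown top
    obtain ⟨q, hq⟩ := p.reachable.exists_walk_length_eq_edist
    calc ((f top - f bot : ℕ) : ℕ∞) ≤ q.length := by
          have := q.le_add_length hf
          exact_mod_cast (by omega)
      _ = G.edist top bot := hq
      _ ≤ G.ediam := edist_le_ediam

end SimpleGraph

section TokenGraph

variable {V : Type*} [DecidableEq V] {G : SimpleGraph V} {k : ℕ}

theorem exists_sdiff_eq_of_tokenGraph_adj {A B : {s : Finset V // s.card = k}}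
    (h : (tokenGraph G k).Adj A B) : ∃ x y, G.Adj x y ∧ A.1 \ B.1 = {x} ∧ B.1 \ A.1 = {y} := by
  obtain ⟨x, y, hxy, hAB⟩ := h
  have hunion : A.1 \ B.1 ∪ B.1 \ A.1 = {x, y} := hAB
  have hcard : #(A.1 \ B.1) + #(B.1 \ A.1) = 2 := by
    rw [← card_union_of_disjoint disjoint_sdiff_sdiff, hunion, card_pair hxy.ne]
  have hcomm : #(A.1 \ B.1) = #(B.1 \ A.1) := card_sdiff_comm (A.2.trans B.2.symm)
  obtain ⟨u, hu⟩ := card_eq_one.mp (show #(A.1 \ B.1) = 1 by omega)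
  obtain ⟨v, hv⟩ := card_eq_one.mp (show #(B.1 \ A.1) = 1 by omega)
  have huv : u ≠ v := by
    have hu' : u ∈ A.1 \ B.1 := by simp [hu]
    have hv' : v ∈ B.1 \ A.1 := by simp [hv]
    rintro rfl
    exact (mem_sdiff.mp hv').2 (mem_sdiff.mp hu').1
  have hmem : ∀ w, w = u ∨ w = v ↔ w = x ∨ w = y := fun w => by
    simpa [hu, hv] using congrArg (w ∈ ·) hunion
  refine ⟨u, v, ?_, hu, hv⟩
  rcases (hmem u).mp (.inl rfl) with rfl | rfl <;> rcases (hmem v).mp (.inr rfl) with rfl | rfl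
  exacts [absurd rfl huv, hxy, hxy.symm, absurd rfl huv]

theorem exists_tokenGraph_adj_insert_erase {A : {s : Finset V // s.card = k}} {x y : V}
    (hx : x ∈ A.1) (hy : y ∉ A.1) (hxy : G.Adj x y) :
    ∃ B : {s : Finset V // s.card = k},
      (tokenGraph G k).Adj A B ∧ B.1 = insert y (A.1.erase x) := by
  have hcard : #(insert y (A.1.erase x)) = k := by
    rw [card_insert_of_notMem (fun h => hy (mem_of_mem_erase h)), card_erase_of_mem hx, A.2]
    have := A.2 ▸ card_pos.mpr ⟨x, hx⟩
    omega
  refine ⟨⟨_, hcard⟩, ⟨x, y, hxy, ?_⟩, rfl⟩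
  ext w
  simp only [mem_symmDiff, mem_insert, mem_erase, mem_singleton]
  by_cases hwx : w = x <;> by_cases hwy : w = y <;> simp_all [hxy.ne]
  
end TokenGraph

theorem Finset.sum_insert_erase_add {ι M : Type*} [AddCommMonoid M] [DecidableEq ι]
    {s : Finset ι} {x y : ι} (f : ι → M) (hx : x ∈ s) (hy : y ∉ s) :
    ∑ i ∈ insert y (s.erase x), f i + f x = ∑ i ∈ s, f i + f y := by
  rw [sum_insert (fun h => hy (mem_of_mem_erase h)), add_assoc, sum_erase_add _ _ hx, add_comm]

section PathGraph

variable {n k : ℕ}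

theorem Fin.exists_notMem_succ_mem {A : Finset (Fin n)} {a b : Fin n} (hb : b ∉ A) (ha : a ∈ A)
    (hba : b < a) : ∃ y ∉ A, ∃ x ∈ A, y.val + 1 = x.val := by
  obtain ⟨m, hm, hx, hm1⟩ := Nat.exists_not_and_succ_of_not_zero_of_exists
    (p := fun m => ∃ h : b.val + m < n, (⟨b.val + m, h⟩ : Fin n) ∈ A) (by simpa using hb)
    ⟨a.val - b.val, by omega, by convert ha using 1; ext; simp only; omega⟩
  exact ⟨⟨b.val + m, by omega⟩, fun hy => hm ⟨_, hy⟩, _, hm1, rfl⟩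

theorem Fin.exists_mem_succ_notMem {A : Finset (Fin n)} {a b : Fin n} (ha : a ∈ A) (hb : b ∉ A)
    (hab : a < b) : ∃ x ∈ A, ∃ y ∉ A, x.val + 1 = y.val := by
  obtain ⟨x, hx, y, hy, hxy⟩ := exists_notMem_succ_mem (A := Aᶜ) (by simpa) (by simpa) hab
  exact ⟨x, by simpa using hx, y, by simpa using hy, hxy⟩

theorem Finset.sum_val_attachFin {s : Finset ℕ} (h : ∀ m ∈ s, m < n) :
    ∑ i ∈ s.attachFin h, (i : ℕ) = ∑ m ∈ s, m := by
  conv_rhs => rw [← map_valEmbedding_attachFin h, sum_map]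
  rfl

def bottomConfig (hk : k ≤ n) : {s : Finset (Fin n) // s.card = k} :=
  ⟨(range k).attachFin fun _ hm => (mem_range.mp hm).trans_le hk, by simp⟩

def topConfig (hk : k ≤ n) : {s : Finset (Fin n) // s.card = k} :=
  ⟨(Ico (n - k) n).attachFin fun _ hm => (mem_Ico.mp hm).2, by simp; omega⟩

theorem mem_bottomConfig {hk : k ≤ n} {x : Fin n} : x ∈ (bottomConfig hk).1 ↔ x.val < k := by
  simp [bottomConfig]

theorem mem_topConfig {hk : k ≤ n} {x : Fin n} : x ∈ (topConfig hk).1 ↔ n - k ≤ x.val := by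
  simp [topConfig, x.2]

theorem sum_val_topConfig (hk : k ≤ n) :
    ∑ i ∈ (topConfig hk).1, (i : ℕ) = ∑ i ∈ (bottomConfig hk).1, (i : ℕ) + k * (n - k) := by
  rw [topConfig, bottomConfig, sum_val_attachFin, sum_val_attachFin, sum_Ico_eq_sum_range,
    Nat.sub_sub_self hk, sum_add_distrib, sum_const, card_range, smul_eq_mul, add_comm]

theorem sum_val_le_of_tokenGraph_adj {A B : {s : Finset (Fin n) // s.card = k}}
    (h : (tokenGraph (pathGraph n) k).Adj A B) : ∑ i ∈ A.1, (i : ℕ) ≤ ∑ i ∈ B.1, (i : ℕ) + 1 := by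
  obtain ⟨x, y, hxy, hx, hy⟩ := exists_sdiff_eq_of_tokenGraph_adj h
  have hA := sum_inter_add_sum_sdiff A.1 B.1 (fun i : Fin n => (i : ℕ))
  have hB := sum_inter_add_sum_sdiff B.1 A.1 (fun i : Fin n => (i : ℕ))
  rw [hx, sum_singleton] at hA
  rw [hy, sum_singleton, inter_comm] at hB
  have := pathGraph_adj.mp hxy
  omega

theorem sum_val_le_card_mul (A : {s : Finset (Fin n) // s.card = k}) :
    ∑ i ∈ A.1, (i : ℕ) ≤ k * (n - 1) := by
  simpa [A.2] using sum_le_card_nsmul A.1 (fun i : Fin n => (i : ℕ)) (n - 1) fun i _ => by omega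

theorem exists_tokenGraph_adj_sum_val_lt (hk : k ≤ n) {A : {s : Finset (Fin n) // s.card = k}}
    (hA : A ≠ bottomConfig hk) :
    ∃ B, (tokenGraph (pathGraph n) k).Adj A B ∧ ∑ i ∈ B.1, (i : ℕ) < ∑ i ∈ A.1, (i : ℕ) := by
  obtain ⟨b, hb, hbA⟩ : ∃ b ∈ (bottomConfig hk).1, b ∉ A.1 := by
    by_contra! h
    exact hA (Subtype.ext (eq_of_subset_of_card_le h (by rw [A.2, (bottomConfig hk).2])).symm)
  obtain ⟨a, ha, hba⟩ : ∃ a ∈ A.1, b < a := by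
    by_contra! h
    have := card_le_card fun a ha => mem_Iio.mpr ((h a ha).lt_of_ne (by rintro rfl; exact hbA ha))
    rw [A.2, Fin.card_Iio] at this
    rw [mem_bottomConfig] at hb
    omega
  obtain ⟨y, hy, x, hx, hyx⟩ := Fin.exists_notMem_succ_mem hbA ha hba
  obtain ⟨B, hAB, hB⟩ := exists_tokenGraph_adj_insert_erase hx hy (pathGraph_adj.mpr (.inr hyx))
  have := sum_insert_erase_add (fun i : Fin n => (i : ℕ)) hx hy
  exact ⟨B, hAB, by rw [hB]; omega⟩

theorem exists_tokenGraph_adj_sum_val_gt (hk : k ≤ n) {A : {s : Finset (Fin n) // s.card = k}}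
    (hA : A ≠ topConfig hk) :
    ∃ B, (tokenGraph (pathGraph n) k).Adj A B ∧ ∑ i ∈ A.1, (i : ℕ) < ∑ i ∈ B.1, (i : ℕ) := by
  obtain ⟨b, hb, hbA⟩ : ∃ b ∈ (topConfig hk).1, b ∉ A.1 := by
    by_contra! h
    exact hA (Subtype.ext (eq_of_subset_of_card_le h (by rw [A.2, (topConfig hk).2])).symm)
  obtain ⟨a, ha, hab⟩ : ∃ a ∈ A.1, a < b := by
    by_contra! h
    have := card_le_card fun a ha => mem_Ioi.mpr ((h a ha).lt_of_ne' (by rintro rfl; exact hbA ha))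
    rw [A.2, Fin.card_Ioi] at this
    rw [mem_topConfig] at hb
    omega
  obtain ⟨x, hx, y, hy, hxy⟩ := Fin.exists_mem_succ_notMem ha hbA hab
  obtain ⟨B, hAB, hB⟩ := exists_tokenGraph_adj_insert_erase hx hy (pathGraph_adj.mpr (.inl hxy))
  have := sum_insert_erase_add (fun i : Fin n => (i : ℕ)) hx hy
  exact ⟨B, hAB, by rw [hB]; omega⟩

theorem ediam_tokenGraph_pathGraph (hk : k ≤ n) :
    (tokenGraph (pathGraph n) k).ediam = (k * (n - k) : ℕ) := by
  rw [ediam_eq_of_potential (fun _ _ => sum_val_le_of_tokenGraph_adj) sum_val_le_card_mul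
    (fun _ => exists_tokenGraph_adj_sum_val_lt hk) (fun _ => exists_tokenGraph_adj_sum_val_gt hk),
    sum_val_topConfig, Nat.add_sub_cancel_left]

end PathGraph

theorem stmt12 {n : ℕ} (hn : 4 ≤ n) :
    (tokenGraph (pathGraph n) 3).diam = 3 * (n - 3) := by
  rw [diam, ediam_tokenGraph_pathGraph (by omega), ENat.toNat_natCast]
end

section
/- For every n ≥ 3, the independence number of the 3-token graph Γ₃(P_n) of the path on n vertices equals (n³ − 3n² + 2n)/12 if n is even and (n³ − 3n² + 5n − 3)/12 if n is odd. -/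
/-!
Moving one token along an edge of `Pₙ` changes the sum of the token positions by one, so the
3-sets with odd position sum form an independent set of `Γ₃(Pₙ)`. It is a maximum one: `Γ₃(Pₙ)`
has a matching, given by an involution, whose only unmatched vertices are the sets
`{2i, 2i+1, n-1}` for odd `n`, and these have odd sum. An independent set contains at most one
end of each matching edge, and every even set is matched to an odd one, so no independent set
beats the odd class, whose size is `(C(n,3) + #unmatched) / 2`.
-/

open SimpleGraph Finset

open Function

theorem Finset.exists_lt_lt_eq_of_card_eq_three {α : Type*} [LinearOrder α] {s : Finset α}
    (h : #s = 3) : ∃ a b c, a < b ∧ b < c ∧ s = {a, b, c} := by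
  refine ⟨s.orderEmbOfFin h 0, s.orderEmbOfFin h 1, s.orderEmbOfFin h 2, by simp, by simp, ?_⟩
  ext x
  rw [← mem_coe, ← s.range_orderEmbOfFin h, Set.mem_range, Fin.exists_fin_succ,
    Fin.exists_fin_succ, Fin.exists_fin_one]
  simp [eq_comm]

theorem Finset.eq_of_triple_eq_of_lt {α : Type*} [LinearOrder α] {a b c a' b' c' : α}
    (hab : a < b) (hbc : b < c) (hab' : a' < b') (hbc' : b' < c')
    (h : ({a, b, c} : Finset α) = {a', b', c'}) : a = a' ∧ b = b' ∧ c = c' := by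
  have ha : a ∈ ({a', b', c'} : Finset α) := h ▸ by simp
  have hb : b ∈ ({a', b', c'} : Finset α) := h ▸ by simp
  have hc : c ∈ ({a', b', c'} : Finset α) := h ▸ by simp
  have ha' : a' ∈ ({a, b, c} : Finset α) := h ▸ by simp
  have hb' : b' ∈ ({a, b, c} : Finset α) := h ▸ by simp
  have hc' : c' ∈ ({a, b, c} : Finset α) := h ▸ by simp
  simp only [mem_insert, mem_singleton] at ha hb hc ha' hb' hc'
  grind

section InvolutiveMatching

variable {V : Type*} [Fintype V] [DecidableEq V] {G : SimpleGraph V} {p : V → Prop}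
  [DecidablePred p] {f : V → V}

theorem card_le_card_filter_of_involutive (hp : ∀ v w, G.Adj v w → (p v ↔ ¬p w))
    (hf : Involutive f) (hadj : ∀ v, f v ≠ v → G.Adj v (f v)) (hfix : ∀ v, f v = v → p v)
    {s : Finset V} (hs : ∀ a ∈ s, ∀ b ∈ s, ¬G.Adj a b) : #s ≤ #{v | p v} := by
  have hmaps : ∀ v ∈ s, ¬p v → p (f v) ∧ f v ∉ s := fun v hv hpv => by
    have hadj := hadj v (mt (hfix v) hpv)
    exact ⟨by simpa [hpv] using hp v (f v) hadj, fun hfv => hs v hv (f v) hfv hadj⟩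
  calc #s = #{v ∈ s | p v} + #{v ∈ s | ¬p v} := (card_filter_add_card_filter_not _).symm
    _ = #({v ∈ s | p v} ∪ {v ∈ s | ¬p v}.image f) := by
      rw [card_union_of_disjoint, card_image_of_injective _ hf.injective]
      simp only [Finset.disjoint_left, mem_filter, mem_image]
      rintro _ ⟨hv, -⟩ ⟨w, ⟨hw, hpw⟩, rfl⟩
      exact (hmaps w hw hpw).2 hv
    _ ≤ #{v | p v} := by
      refine card_le_card (union_subset (fun v hv => ?_) (fun v hv => ?_)) <;>
        simp only [mem_filter, mem_univ, true_and, mem_image] at hv ⊢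
      · exact hv.2
      · obtain ⟨w, ⟨hw, hpw⟩, rfl⟩ := hv
        exact (hmaps w hw hpw).1

theorem card_filter_eq_card_filter_not_add_card_fixed (hp : ∀ v w, G.Adj v w → (p v ↔ ¬p w))
    (hf : Involutive f) (hadj : ∀ v, f v ≠ v → G.Adj v (f v)) (hfix : ∀ v, f v = v → p v) :
    #{v | p v} = #{v | ¬p v} + #{v | f v = v} := by
  have hflip : ∀ v, f v ≠ v → (p v ↔ ¬p (f v)) := fun v h => hp v (f v) (hadj v h)
  have hsplit : ({v | p v} : Finset V) =
      ({v | ¬p v} : Finset V).image f ∪ ({v | f v = v} : Finset V) := by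
    ext v
    simp only [mem_filter, mem_univ, true_and, mem_union, mem_image]
    refine ⟨fun hv => ?_, ?_⟩
    · by_cases h : f v = v
      · exact .inr h
      · exact .inl ⟨f v, (hflip v h).1 hv, hf v⟩
    · rintro (⟨w, hw, rfl⟩ | h)
      · exact not_not.1 (mt (hflip w (mt (hfix w) hw)).2 hw)
      · exact hfix v h
  rw [hsplit, card_union_of_disjoint, card_image_of_injective _ hf.injective]
  simp only [Finset.disjoint_left, mem_filter, mem_univ, true_and, mem_image]
  rintro _ ⟨w, hw, rfl⟩ h
  exact hw (hfix w (hf.injective h))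

theorem isGreatest_card_indep_of_involutive (hp : ∀ v w, G.Adj v w → (p v ↔ ¬p w))
    (hf : Involutive f) (hadj : ∀ v, f v ≠ v → G.Adj v (f v)) (hfix : ∀ v, f v = v → p v) :
    IsGreatest {k | ∃ s : Finset V, #s = k ∧ ∀ a ∈ s, ∀ b ∈ s, ¬G.Adj a b} #{v | p v} := by
  refine ⟨⟨_, rfl, fun a ha b hb hab => ?_⟩, ?_⟩
  · simp only [mem_filter, mem_univ, true_and] at ha hb
    exact (hp a b hab).1 ha hb
  · rintro _ ⟨s, rfl, hs⟩
    exact card_le_card_filter_of_involutive hp hf hadj hfix hs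

end InvolutiveMatching

section TokenGraph

variable {V : Type*} [DecidableEq V] {G : SimpleGraph V} {k : ℕ} {A B : {s : Finset V // #s = k}}

theorem sum_add_sum_of_tokenGraph_adj {w : V → ℕ} (h : (tokenGraph G k).Adj A B) :
    ∃ x y, G.Adj x y ∧
      ∑ v ∈ A.1, w v + ∑ v ∈ B.1, w v = w x + w y + 2 * ∑ v ∈ A.1 ∩ B.1, w v := by
  obtain ⟨x, y, hxy, hAB⟩ := h
  refine ⟨x, y, hxy, ?_⟩
  rw [← sum_union_inter, ← sum_pair hxy.ne, ← hAB, symmDiff_eq_sup_sdiff_inf, two_mul,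
    ← add_assoc, sup_eq_union, inf_eq_inter, sum_sdiff inter_subset_union]

theorem odd_sum_iff_of_tokenGraph_adj {w : V → ℕ} (hw : ∀ x y, G.Adj x y → Odd (w x + w y))
    (h : (tokenGraph G k).Adj A B) : Odd (∑ v ∈ A.1, w v) ↔ ¬Odd (∑ v ∈ B.1, w v) := by
  obtain ⟨x, y, hxy, hsum⟩ := sum_add_sum_of_tokenGraph_adj (w := w) h
  have hodd : Odd (∑ v ∈ A.1, w v + ∑ v ∈ B.1, w v) :=
    hsum ▸ (hw x y hxy).add_even (even_two_mul _)
  rwa [Nat.odd_add, ← Nat.not_odd_iff_even] at hodd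

end TokenGraph

/-- The matching of `Γ₃(Pₙ)` on sorted triples `a < b < c`: the smallest token moves inside its
pair `{2i, 2i+1}` unless that pair is `{a, b}`; then the largest token moves inside its pair
`{b+2j+1, b+2j+2}`, and stays put only when it is the unpaired token `n-1`. -/
def tripleMatch (n : ℕ) : ℕ × ℕ × ℕ → ℕ × ℕ × ℕ
  | (a, b, c) =>
    if a % 2 = 1 then (a - 1, b, c)
    else if a + 1 < b then (a + 1, b, c)
    else if (c - b) % 2 = 0 then (a, b, c - 1)
    else if c + 1 < n then (a, b, c + 1)
    else (a, b, c)

abbrev IncTriple (n : ℕ) := {t : ℕ × ℕ × ℕ // t.1 < t.2.1 ∧ t.2.1 < t.2.2 ∧ t.2.2 < n}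

namespace IncTriple

variable {n : ℕ}

theorem tripleMatch_lt (t : IncTriple n) :
    (tripleMatch n t.1).1 < (tripleMatch n t.1).2.1 ∧
      (tripleMatch n t.1).2.1 < (tripleMatch n t.1).2.2 ∧ (tripleMatch n t.1).2.2 < n := by
  obtain ⟨⟨a, b, c⟩, h⟩ := t
  dsimp only at h
  simp only [tripleMatch]
  split_ifs <;> dsimp only <;> omega

def next (t : IncTriple n) : IncTriple n := ⟨tripleMatch n t.1, t.tripleMatch_lt⟩

theorem next_next (t : IncTriple n) : t.next.next = t := by
  obtain ⟨⟨a, b, c⟩, h⟩ := t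
  dsimp only at h
  simp only [next, tripleMatch, Subtype.mk.injEq]
  split_ifs <;> dsimp only at * <;> simp only [Prod.mk.injEq, and_true, true_and] <;> omega

theorem next_eq_self_iff (t : IncTriple n) :
    t.next = t ↔ n % 2 = 1 ∧ t.1.1 % 2 = 0 ∧ t.1.2.1 = t.1.1 + 1 ∧ t.1.2.2 + 1 = n := by
  obtain ⟨⟨a, b, c⟩, h⟩ := t
  dsimp only at h
  simp only [next, tripleMatch, Subtype.mk.injEq]
  split_ifs <;> simp <;> omega

theorem next_eq_of_ne_self (t : IncTriple n) (h : t.next ≠ t) :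
    (∃ a, (a + 1 = t.1.1 ∨ t.1.1 + 1 = a) ∧ t.next.1 = (a, t.1.2)) ∨
      (∃ c, (c + 1 = t.1.2.2 ∨ t.1.2.2 + 1 = c) ∧ t.next.1 = (t.1.1, t.1.2.1, c)) := by
  obtain ⟨⟨a, b, c⟩, h'⟩ := t
  dsimp only at h'
  simp only [next, tripleMatch, ne_eq, Subtype.mk.injEq] at h ⊢
  split_ifs at h ⊢ <;> simp at h ⊢ <;> omega

def toToken (t : IncTriple n) : {s : Finset (Fin n) // #s = 3} :=
  ⟨{⟨t.1.1, by have := t.2; omega⟩, ⟨t.1.2.1, by have := t.2; omega⟩, ⟨t.1.2.2, t.2.2.2⟩},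
    card_eq_three.2 ⟨_, _, _, by have := t.2; simp [Fin.ext_iff]; omega,
      by have := t.2; simp [Fin.ext_iff]; omega, by have := t.2; simp [Fin.ext_iff]; omega, rfl⟩⟩

theorem toToken_bijective : Bijective (toToken (n := n)) := by
  refine ⟨fun t t' h => ?_, fun A => ?_⟩
  · have := t.2
    have := t'.2
    have h3 := Finset.eq_of_triple_eq_of_lt (α := Fin n) (by simp [Fin.lt_def]; omega)
      (by simp [Fin.lt_def]; omega) (by simp [Fin.lt_def]; omega) (by simp [Fin.lt_def]; omega)
      (congrArg Subtype.val h)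
    simp only [Fin.mk.injEq] at h3
    exact Subtype.ext (Prod.ext h3.1 (Prod.ext h3.2.1 h3.2.2))
  · obtain ⟨a, b, c, hab, hbc, hA⟩ := Finset.exists_lt_lt_eq_of_card_eq_three A.2
    exact ⟨⟨(a, b, c), hab, hbc, c.2⟩, Subtype.ext (by simp [toToken, hA])⟩

theorem sum_val_toToken (t : IncTriple n) :
    ∑ x ∈ t.toToken.1, x.val = t.1.1 + t.1.2.1 + t.1.2.2 := by
  have := t.2
  rw [toToken, sum_insert (by simp [Fin.ext_iff]; omega), sum_pair (by simp [Fin.ext_iff]; omega),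
    add_assoc]

theorem mem_toToken {t : IncTriple n} {x : Fin n} :
    x ∈ t.toToken.1 ↔ x.val = t.1.1 ∨ x.val = t.1.2.1 ∨ x.val = t.1.2.2 := by
  simp [toToken, Fin.ext_iff]

theorem adj_toToken_next (t : IncTriple n) (h : t.next ≠ t) :
    (tokenGraph (pathGraph n) 3).Adj t.toToken t.next.toToken := by
  have ht := t.2
  have hnext := t.next.2
  rcases t.next_eq_of_ne_self h with ⟨a, ha, heq⟩ | ⟨c, hc, heq⟩ <;> rw [heq] at hnext <;>
    dsimp only at hnext
  · refine ⟨⟨t.1.1, by omega⟩, ⟨a, by omega⟩, pathGraph_adj.2 (by dsimp only; omega), ?_⟩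
    ext x
    simp only [mem_symmDiff, mem_toToken, heq, mem_insert, mem_singleton, Fin.ext_iff]
    omega
  · refine ⟨⟨t.1.2.2, by omega⟩, ⟨c, by omega⟩, pathGraph_adj.2 (by dsimp only; omega), ?_⟩
    ext x
    simp only [mem_symmDiff, mem_toToken, heq, mem_insert, mem_singleton, Fin.ext_iff]
    omega

end IncTriple

noncomputable def tokenEquiv (n : ℕ) : IncTriple n ≃ {s : Finset (Fin n) // #s = 3} :=
  Equiv.ofBijective _ IncTriple.toToken_bijective

noncomputable def tokenMatch (n : ℕ) (A : {s : Finset (Fin n) // #s = 3}) :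
    {s : Finset (Fin n) // #s = 3} :=
  ((tokenEquiv n).symm A).next.toToken

section TokenMatch

variable {n : ℕ}

theorem tokenMatch_toToken (t : IncTriple n) : tokenMatch n t.toToken = t.next.toToken :=
  congrArg (fun t => t.next.toToken) ((tokenEquiv n).symm_apply_apply t)

theorem tokenMatch_involutive : Involutive (tokenMatch n) := by
  intro A
  obtain ⟨t, rfl⟩ := IncTriple.toToken_bijective.2 A
  rw [tokenMatch_toToken, tokenMatch_toToken, t.next_next]

theorem tokenMatch_toToken_eq_self_iff (t : IncTriple n) :
    tokenMatch n t.toToken = t.toToken ↔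
      n % 2 = 1 ∧ t.1.1 % 2 = 0 ∧ t.1.2.1 = t.1.1 + 1 ∧ t.1.2.2 + 1 = n := by
  rw [tokenMatch_toToken, IncTriple.toToken_bijective.1.eq_iff, t.next_eq_self_iff]

theorem adj_tokenMatch (A : {s : Finset (Fin n) // #s = 3}) (h : tokenMatch n A ≠ A) :
    (tokenGraph (pathGraph n) 3).Adj A (tokenMatch n A) := by
  obtain ⟨t, rfl⟩ := IncTriple.toToken_bijective.2 A
  rw [tokenMatch_toToken] at h ⊢
  exact t.adj_toToken_next (mt (congrArg _) h)

theorem odd_sum_of_tokenMatch_eq_self (A : {s : Finset (Fin n) // #s = 3})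
    (h : tokenMatch n A = A) : Odd (∑ x ∈ A.1, x.val) := by
  obtain ⟨t, rfl⟩ := IncTriple.toToken_bijective.2 A
  rw [tokenMatch_toToken_eq_self_iff] at h
  rw [t.sum_val_toToken, Nat.odd_iff]
  omega

theorem card_tokenMatch_fixed :
    #{A | tokenMatch n A = A} = if Even n then 0 else (n - 1) / 2 := by
  split_ifs with hn
  · refine card_eq_zero.2 (filter_eq_empty_iff.2 fun A _ h => ?_)
    obtain ⟨t, rfl⟩ := IncTriple.toToken_bijective.2 A
    rw [tokenMatch_toToken_eq_self_iff] at h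
    exact Nat.not_even_iff_odd.2 (Nat.odd_iff.2 h.1) hn
  · rw [Nat.not_even_iff_odd, Nat.odd_iff] at hn
    rw [← card_range ((n - 1) / 2)]
    symm
    refine card_bij (fun i hi => IncTriple.toToken ⟨(2 * i, 2 * i + 1, n - 1), by
      rw [mem_range] at hi; dsimp only; omega⟩)
      (fun i hi => ?_) (fun i hi j hj h => ?_) (fun A hA => ?_)
    · rw [mem_filter, tokenMatch_toToken_eq_self_iff]
      rw [mem_range] at hi
      exact ⟨mem_univ _, hn, by dsimp only; omega⟩
    · have := congrArg (fun t : IncTriple n => t.1.1) (IncTriple.toToken_bijective.1 h)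
      dsimp only at this
      omega
    · obtain ⟨t, rfl⟩ := IncTriple.toToken_bijective.2 A
      rw [mem_filter, tokenMatch_toToken_eq_self_iff] at hA
      have ht := t.2
      refine ⟨t.1.1 / 2, mem_range.2 (by omega), congrArg _ (Subtype.ext ?_)⟩
      ext <;> dsimp only <;> omega

end TokenMatch

theorem odd_val_add_val_of_pathGraph_adj {n : ℕ} {x y : Fin n} (h : (pathGraph n).Adj x y) :
    Odd (x.val + y.val) :=
  Nat.odd_iff.2 (by rcases pathGraph_adj.1 h with h | h <;> omega)

theorem six_mul_choose_three_add (n : ℕ) : 6 * n.choose 3 + 3 * n ^ 2 = n ^ 3 + 2 * n := by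
  suffices 2 * n.choose 2 + n = n ^ 2 ∧ 6 * n.choose 3 + 3 * n ^ 2 = n ^ 3 + 2 * n from this.2
  induction n with
  | zero => simp
  | succ n ih =>
    rw [Nat.choose_succ_succ', Nat.choose_succ_succ', Nat.choose_one_right]
    constructor <;> nlinarith [ih.1, ih.2]

theorem two_mul_indepNumber_formula (n : ℕ) :
    2 * (if Even n then (n ^ 3 - 3 * n ^ 2 + 2 * n) / 12
      else (n ^ 3 - 3 * n ^ 2 + 5 * n - 3) / 12) =
      n.choose 3 + if Even n then 0 else (n - 1) / 2 := by
  rcases lt_or_ge n 3 with hn | hn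
  · interval_cases n <;> rfl
  have h := six_mul_choose_three_add n
  have hle : 3 * n ^ 2 ≤ n ^ 3 := by rw [pow_succ n 2, mul_comm]; gcongr
  obtain ⟨m, rfl | rfl⟩ := Nat.even_or_odd' n
  · have h2 : (2 * m) ^ 2 = 4 * m ^ 2 := by ring
    have h3 : (2 * m) ^ 3 = 8 * m ^ 3 := by ring
    simp only [even_two_mul, if_true]
    omega
  · have h2 : (2 * m + 1) ^ 2 = 4 * m ^ 2 + 4 * m + 1 := by ring
    have h3 : (2 * m + 1) ^ 3 = 8 * m ^ 3 + 12 * m ^ 2 + 6 * m + 1 := by ring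
    simp only [Nat.not_even_two_mul_add_one, if_false]
    omega

theorem stmt13_general {n : ℕ} :
    IsGreatest {k : ℕ | ∃ s : Finset {s : Finset (Fin n) // s.card = 3}, s.card = k ∧
        ∀ a ∈ s, ∀ b ∈ s, ¬(tokenGraph (pathGraph n) 3).Adj a b}
      (if Even n then (n ^ 3 - 3 * n ^ 2 + 2 * n) / 12
       else (n ^ 3 - 3 * n ^ 2 + 5 * n - 3) / 12) := by
  have hp (A B) (h : (tokenGraph (pathGraph n) 3).Adj A B) :=
    odd_sum_iff_of_tokenGraph_adj (w := Fin.val) (fun _ _ => odd_val_add_val_of_pathGraph_adj) h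
  have hcount := card_filter_eq_card_filter_not_add_card_fixed hp tokenMatch_involutive
    adj_tokenMatch odd_sum_of_tokenMatch_eq_self
  have htotal : #{A : {s : Finset (Fin n) // #s = 3} | Odd (∑ x ∈ A.1, x.val)} +
      #{A : {s : Finset (Fin n) // #s = 3} | ¬Odd (∑ x ∈ A.1, x.val)} = n.choose 3 := by
    rw [card_filter_add_card_filter_not, card_univ, Fintype.card_finset_len, Fintype.card_fin]
  have hformula := two_mul_indepNumber_formula n
  rw [card_tokenMatch_fixed] at hcount
  convert isGreatest_card_indep_of_involutive hp tokenMatch_involutive adj_tokenMatch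
    odd_sum_of_tokenMatch_eq_self using 1
  omega

theorem stmt13 {n : ℕ} (hn : 3 ≤ n) :
    IsGreatest {k : ℕ | ∃ s : Finset {s : Finset (Fin n) // s.card = 3}, s.card = k ∧
        ∀ a ∈ s, ∀ b ∈ s, ¬(tokenGraph (pathGraph n) 3).Adj a b}
      (if Even n then (n ^ 3 - 3 * n ^ 2 + 2 * n) / 12
       else (n ^ 3 - 3 * n ^ 2 + 5 * n - 3) / 12) :=
  stmt13_general
end

section
/- For every n ≥ 4, the map sending a 3-subset {x_i, x_j, x_k} with i < j < k of the vertices of the path P_n to the triple (j−1, i, n+1−k) is a well-defined bijection from the vertex set of Γ₃(P_n) onto the vertex set of the cubical staircase graph CS_n. -/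
open SimpleGraph Finset

/-! A 3-subset of `Fin n` is the same as its increasing enumeration `i < j < k`, and the
inequalities `i < j < k < n` are exactly those cut out by `CS n` after the change of coordinates
`(i, j, k) ↦ (j, i + 1, n - k)`, which is inverted by `(a, b, c) ↦ (b - 1, a, n - c)`. -/

abbrev IncreasingTriple (α : Type*) [LinearOrder α] :=
  {t : α × α × α // t.1 < t.2.1 ∧ t.2.1 < t.2.2}

section IncreasingTriple

variable {α : Type*} [LinearOrder α]

theorem card_eq_three_of_increasingTriple (t : IncreasingTriple α) :
    ({t.1.1, t.1.2.1, t.1.2.2} : Finset α).card = 3 :=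
  card_eq_three.mpr ⟨_, _, _, t.2.1.ne, (t.2.1.trans t.2.2).ne, t.2.2.ne, rfl⟩

def equivIncreasingTriple : {s : Finset α // s.card = 3} ≃ IncreasingTriple α where
  toFun s :=
    let f := s.1.orderEmbOfFin s.2
    ⟨(f 0, f 1, f 2), f.strictMono (by decide), f.strictMono (by decide)⟩
  invFun t := ⟨{t.1.1, t.1.2.1, t.1.2.2}, card_eq_three_of_increasingTriple t⟩
  left_inv s := by
    apply Subtype.ext
    rw [← Finset.coe_inj, ← s.1.range_orderEmbOfFin s.2]
    simp [Fin.range_fin_succ, Set.range_unique, Fin.tail]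
  right_inv t := by
    have hf := orderEmbOfFin_unique (card_eq_three_of_increasingTriple t)
      (f := ![t.1.1, t.1.2.1, t.1.2.2]) (fun x => by fin_cases x <;> simp)
      (Fin.strictMono_iff_lt_succ.mpr fun i => by fin_cases i; exacts [t.2.1, t.2.2])
    ext <;> simp [← hf]

theorem equivIncreasingTriple_apply_of_eq {s : {s : Finset α // s.card = 3}} {a b c : α}
    (hab : a < b) (hbc : b < c) (hs : s.1 = {a, b, c}) :
    (equivIncreasingTriple s).1 = (a, b, c) := by
  have : s = equivIncreasingTriple.symm ⟨(a, b, c), hab, hbc⟩ := Subtype.ext hs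
  rw [this, Equiv.apply_symm_apply]

end IncreasingTriple

/-- `Fin n` is 0-indexed, so the paper's `(j - 1, i, n + 1 - k)` for `x_i, x_j, x_k` becomes
`(j, i + 1, n - k)`. -/
def increasingTripleEquivCSVert (n : ℕ) : IncreasingTriple (Fin n) ≃ CSVert n where
  toFun t := ⟨((t.1.2.1 : ℕ), (t.1.1 : ℕ) + 1, n - (t.1.2.2 : ℕ)), by
    have := t.2; have := t.1.2.2.isLt; simp only [Fin.lt_def] at *; omega⟩
  invFun v := ⟨(⟨v.1.2.1 - 1, by omega⟩, ⟨v.1.1, by omega⟩, ⟨n - v.1.2.2, by omega⟩), by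
    simp only [Fin.mk_lt_mk]; omega⟩
  left_inv t := by
    have := t.2; have := t.1.2.2.isLt; simp only [Fin.lt_def] at *
    ext <;> simp only <;> omega
  right_inv v := by
    have := v.2
    ext <;> simp only <;> omega

theorem stmt17_general {n : ℕ} :
    ∃ ψ : {s : Finset (Fin n) // s.card = 3} → CSVert n,
      Function.Bijective ψ ∧
      ∀ (s : {s : Finset (Fin n) // s.card = 3}) (i j k : Fin n),
        i < j → j < k → s.1 = {i, j, k} →
        (ψ s).1 = ((j : ℕ), (i : ℕ) + 1, n - (k : ℕ)) := by
  refine ⟨equivIncreasingTriple.trans (increasingTripleEquivCSVert n), Equiv.bijective _, ?_⟩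
  intro s i j k hij hjk hs
  simp [increasingTripleEquivCSVert, equivIncreasingTriple_apply_of_eq hij hjk hs]

theorem stmt17 {n : ℕ} (hn : 4 ≤ n) :
    ∃ ψ : {s : Finset (Fin n) // s.card = 3} → CSVert n,
      Function.Bijective ψ ∧
      ∀ (s : {s : Finset (Fin n) // s.card = 3}) (i j k : Fin n),
        i < j → j < k → s.1 = {i, j, k} →
        (ψ s).1 = ((j : ℕ), (i : ℕ) + 1, n - (k : ℕ)) :=
  stmt17_general
end
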